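/- arXiv:2102.04322 — 4 statements merged into one kernel-verified Lean document; each statement's English description precedes it below -/
import Mathlib

section
/- Fix μ > 0, positive integers N, r, m, α with α ≤ r ≤ N and mα ≤ N. Then (μ/C(N,r)) · ∑_{φ=α}^{min(r,mα)} [1/(H_φ − H_{φ−α})] · C(mα, φ) · C(N−mα, r−φ) < μ·m·r/N, where H_n = ∑_{i=1}^n 1/i and H_0 = 0. In particular, for α ≥ 2 the service rate of the α quasi-uniform allocation under fixed-size access with exponential service is strictly less than that of the minimal spreading allocation, which equals μmr/N. -/
open Finset
noncomputable def H (n : ℕ) : ℝ := ∑ i ∈ Finset.Icc 1 n, (1 : ℝ) / i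

/-!
Each difference `H φ - H (φ - α)` is a sum of `α` reciprocals `1/i` with `i ≤ φ`, all but one of
them strictly larger than `1/φ` when `α ≥ 2`; hence `1 / (H φ - H (φ - α)) < φ / α`. Replacing the
coefficients accordingly bounds the sum strictly by `1/α` times a partial sum of
`∑ φ C(mα, φ) C(N - mα, r - φ)`, whose full value is `mα C(N - 1, r - 1) = mα r C(N, r) / N` by
Vandermonde's identity applied to `φ C(mα, φ) = mα C(mα - 1, φ - 1)`.
-/

theorem H_sub_H_eq_sum_Ioc {k n : ℕ} (h : k ≤ n) :
    H n - H k = ∑ i ∈ Ioc k n, (1 : ℝ) / i := by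
  have hIoc : ∀ n, H n = ∑ i ∈ Ioc 0 n, (1 : ℝ) / i := fun n => by
    rw [H, ← Icc_add_one_left_eq_Ioc, zero_add]
  rw [hIoc, hIoc, sub_eq_iff_eq_add', sum_Ioc_consecutive _ (Nat.zero_le _) h]

theorem div_lt_H_sub_H_sub {α φ : ℕ} (hα : 2 ≤ α) (h : α ≤ φ) :
    (α : ℝ) / φ < H φ - H (φ - α) := by
  have hcard : #(Ioc (φ - α) φ) = α := by rw [Nat.card_Ioc]; omega
  calc (α : ℝ) / φ = ∑ _i ∈ Ioc (φ - α) φ, (1 : ℝ) / φ := by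
        rw [sum_const, hcard, nsmul_eq_mul, mul_one_div]
    _ < ∑ i ∈ Ioc (φ - α) φ, (1 : ℝ) / i := by
        refine sum_lt_sum (fun i hi => ?_) ⟨φ - α + 1, by simp only [mem_Ioc]; omega, ?_⟩
        · rw [mem_Ioc] at hi
          gcongr
          · exact_mod_cast (show 0 < i by omega)
          · exact_mod_cast hi.2
        · gcongr
          exact_mod_cast (show φ - α + 1 < φ by omega)
    _ = H φ - H (φ - α) := (H_sub_H_eq_sum_Ioc (Nat.sub_le φ α)).symm

theorem one_div_H_sub_H_sub_lt {α φ : ℕ} (hα : 2 ≤ α) (h : α ≤ φ) :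
    1 / (H φ - H (φ - α)) < (φ : ℝ) / α := by
  have hpos : (0 : ℝ) < α / φ := div_pos (by exact_mod_cast (by omega : 0 < α))
    (by exact_mod_cast (by omega : 0 < φ))
  simpa only [one_div_div] using one_div_lt_one_div_of_lt hpos (div_lt_H_sub_H_sub hα h)

theorem Nat.sum_range_mul_choose_mul_choose {r : ℕ} (hr : 0 < r) (a b : ℕ) :
    ∑ φ ∈ range (r + 1), φ * a.choose φ * b.choose (r - φ) = a * (a + b - 1).choose (r - 1) := by
  obtain ⟨s, rfl⟩ : ∃ s, r = s + 1 := ⟨r - 1, by omega⟩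
  rcases a with _ | n
  · rw [zero_mul]
    exact sum_eq_zero fun i _ => by cases i <;> simp
  have hterm : ∀ j ∈ range (s + 1), (j + 1) * (n + 1).choose (j + 1) * b.choose (s + 1 - (j + 1))
      = (n + 1) * (n.choose j * b.choose (s - j)) := fun j _ => by
    rw [Nat.add_sub_add_right, mul_comm (j + 1), ← Nat.add_one_mul_choose_eq, mul_assoc]
  rw [sum_range_succ', zero_mul, zero_mul, add_zero, sum_congr rfl hterm, ← mul_sum,
    Nat.add_sub_cancel, Nat.add_right_comm, Nat.add_sub_cancel, Nat.add_choose_eq n b, Nat.sum_antidiagonal_eq_sum_range_succ_mk]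

theorem Nat.sum_mul_choose_mul_choose_le {r : ℕ} (hr : 0 < r) {s : Finset ℕ}
    (hs : s ⊆ range (r + 1)) (a b : ℕ) :
    ∑ φ ∈ s, φ * a.choose φ * b.choose (r - φ) ≤ a * (a + b - 1).choose (r - 1) :=
  (sum_le_sum_of_subset hs).trans_eq (Nat.sum_range_mul_choose_mul_choose hr a b)

theorem sum_one_div_H_sub_H_sub_mul_lt {α k : ℕ} (hα : 2 ≤ α) (hk : α ≤ k) {w : ℕ → ℝ}
    (hw : ∀ φ, 0 ≤ w φ) (hwk : 0 < w k) :
    ∑ φ ∈ Icc α k, 1 / (H φ - H (φ - α)) * w φ < ∑ φ ∈ Icc α k, (φ : ℝ) / α * w φ :=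
  sum_lt_sum
    (fun φ hφ => mul_le_mul_of_nonneg_right (one_div_H_sub_H_sub_lt hα (mem_Icc.mp hφ).1).le (hw φ))
    ⟨k, right_mem_Icc.mpr hk, mul_lt_mul_of_pos_right (one_div_H_sub_H_sub_lt hα hk) hwk⟩

theorem Nat.cast_choose_pred_div_choose {n k : ℕ} (hk : 0 < k) (hkn : k ≤ n) :
    ((n - 1).choose (k - 1) : ℝ) / n.choose k = k / n := by
  have hid := Nat.add_one_mul_choose_eq (n - 1) (k - 1)
  rw [Nat.sub_add_cancel (by omega), Nat.sub_add_cancel hk] at hid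
  have hC : (0 : ℝ) < n.choose k := by exact_mod_cast Nat.choose_pos hkn
  have hn : (0 : ℝ) < n := by exact_mod_cast (by omega : 0 < n)
  rw [div_eq_div_iff hC.ne' hn.ne']
  exact_mod_cast (mul_comm _ _).trans (hid.trans (mul_comm _ _))

theorem stmt1 (μ : ℝ) (hμ : 0 < μ) (N r m α : ℕ)
    (hm : 0 < m) (hα : 2 ≤ α) (hαr : α ≤ r) (hrN : r < N) (hmα : m * α ≤ N) :
    (μ / (N.choose r)) *
      ∑ φ ∈ Finset.Icc α (min r (m * α)),
        (1 / (H φ - H (φ - α))) * ((m * α).choose φ) * ((N - m * α).choose (r - φ))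
      < μ * m * r / N := by
  set a := m * α with ha
  set k := min r a
  have hk : α ≤ k := le_min hαr (Nat.le_mul_of_pos_left α hm)
  have hweight : (0 : ℝ) < a.choose k * (N - a).choose (r - k) := by
    exact_mod_cast Nat.mul_pos (Nat.choose_pos (min_le_right _ _)) (Nat.choose_pos (by omega))
  have hvandermonde := Nat.sum_mul_choose_mul_choose_le (r := r) (s := Icc α k) (by omega)
    (fun φ hφ => by simp only [mem_Icc, mem_range] at *; omega) a (N - a)
  rw [Nat.add_sub_cancel' hmα] at hvandermonde
  calc _ < μ / N.choose r * ∑ φ ∈ Icc α k, (φ : ℝ) / α * a.choose φ * (N - a).choose (r - φ) := by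
        refine mul_lt_mul_of_pos_left ?_ (div_pos hμ (by exact_mod_cast Nat.choose_pos hrN.le))
        simpa only [mul_assoc] using sum_one_div_H_sub_H_sub_mul_lt hα hk
          (fun _ => by positivity) hweight
    _ = μ / N.choose r * ((∑ φ ∈ Icc α k, φ * a.choose φ * (N - a).choose (r - φ) : ℕ) / α) := by
        push_cast
        rw [sum_div]
        exact congrArg _ (sum_congr rfl fun φ _ => by ring)
    _ ≤ μ / N.choose r * (a * (N - 1).choose (r - 1) / α) := by
        gcongr
        exact_mod_cast hvandermonde
    _ = μ * m * ((N - 1).choose (r - 1) / N.choose r) := by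
        have hα0 : (α : ℝ) ≠ 0 := by exact_mod_cast (by omega : α ≠ 0)
        rw [ha]
        push_cast
        field_simp
    _ = μ * m * r / N := by
        rw [Nat.cast_choose_pred_div_choose (by omega) hrN.le, mul_div_assoc]
end

section
/- Fix μ > 0 and positive integers N, r, m with r ≤ N ≤ rm. Then μ·r·C(rm, r)/(H_r·C(N, r)) ≥ μ·m·r/N; that is, when rm ≥ N, the maximal spreading allocation service rate under fixed-size access with scaled exponential service is at least the minimal spreading rate μmr/N. -/
open Finset
lemma key_nat (r a b : ℕ) (hr : 0 < r) (hab : a ≤ b) : b * a.choose r ≤ a * b.choose r := by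
  rcases Nat.eq_zero_or_pos a with rfl | ha
  · simp [Nat.choose_eq_zero_of_lt hr]
  obtain ⟨r', rfl⟩ : ∃ r', r = r' + 1 := ⟨r - 1, by omega⟩
  obtain ⟨a', rfl⟩ : ∃ a', a = a' + 1 := ⟨a - 1, by omega⟩
  obtain ⟨b', rfl⟩ : ∃ b', b = b' + 1 := ⟨b - 1, by omega⟩
  apply Nat.le_of_mul_le_mul_right _ (Nat.succ_pos r')
  have h1 := Nat.add_one_mul_choose_eq a' r'
  have h2 := Nat.add_one_mul_choose_eq b' r'
  have h3 : a'.choose r' ≤ b'.choose r' := Nat.choose_le_choose r' (by omega)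
  calc (b' + 1) * (a' + 1).choose (r' + 1) * (r' + 1)
      = (b' + 1) * ((a' + 1).choose (r' + 1) * (r' + 1)) := by ring
    _ = (b' + 1) * ((a' + 1) * a'.choose r') := by rw [← h1]
    _ = (a' + 1) * ((b' + 1) * a'.choose r') := by ring
    _ ≤ (a' + 1) * ((b' + 1) * b'.choose r') := by
        exact Nat.mul_le_mul_left _ (Nat.mul_le_mul_left _ h3)
    _ = (a' + 1) * ((b' + 1).choose (r' + 1) * (r' + 1)) := by rw [← h2]
    _ = (a' + 1) * (b' + 1).choose (r' + 1) * (r' + 1) := by ring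

lemma H_pos {r : ℕ} (hr : 0 < r) : 0 < H r := by
  unfold H
  apply Finset.sum_pos
  · intro i hi
    simp only [mem_Icc] at hi
    have : (0:ℝ) < i := by exact_mod_cast Nat.lt_of_lt_of_le Nat.zero_lt_one hi.1
    positivity
  · exact ⟨1, by simp; omega⟩

lemma H_le (r : ℕ) : H r ≤ r := by
  unfold H
  calc ∑ i ∈ Finset.Icc 1 r, (1:ℝ)/i ≤ ∑ i ∈ Finset.Icc 1 r, 1 := by
        apply Finset.sum_le_sum
        intro i hi
        simp only [mem_Icc] at hi
        have h1 : (1:ℝ) ≤ i := by exact_mod_cast hi.1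
        rw [div_le_one (by linarith)]
        exact h1
    _ = r := by simp

theorem stmt6 (μ : ℝ) (hμ : 0 < μ) (N r m : ℕ) (hN : 0 < N) (hr : 0 < r) (hm : 0 < m)
    (hrN : r ≤ N) (hNrm : N ≤ r * m) :
    μ * r * ((r * m).choose r) / (H r * (N.choose r)) ≥ μ * m * r / N := by
  have hHr : 0 < H r := H_pos hr
  have hCN : 0 < (N.choose r : ℝ) := by exact_mod_cast Nat.choose_pos hrN
  have hNR : (0:ℝ) < N := by exact_mod_cast hN
  rw [ge_iff_le, div_le_div_iff₀ hNR (by positivity)]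
  have hkeyR : ((r*m : ℕ) : ℝ) * N.choose r ≤ (N:ℝ) * (((r*m).choose r : ℕ)) := by
    exact_mod_cast key_nat r N (r*m) hr hNrm
  have hHle : H r ≤ (r : ℝ) := H_le r
  calc μ * m * r * (H r * N.choose r)
      ≤ μ * m * r * (r * N.choose r) := by
        apply mul_le_mul_of_nonneg_left (mul_le_mul_of_nonneg_right hHle hCN.le) (by positivity)
    _ = μ * r * (((r*m : ℕ):ℝ) * N.choose r) := by push_cast; ring
    _ ≤ μ * r * ((N:ℝ) * ((r*m).choose r)) := by
        apply mul_le_mul_of_nonneg_left hkeyR (by positivity)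
    _ = μ * r * ((r*m).choose r) * N := by push_cast; ring
end

section
/- For μ > 0 and 0 < p < 1, define f(α) = (μα/H_α)(1−p)^α for integers α ≥ 1. Then f(α) ≥ f(α+1) whenever α ≥ (1−p)/p, and f(α) ≤ f(α+1) whenever α ≤ (1/2 − p)/p. Consequently, any maximizer of f over the positive integers lies in the interval [(1/2−p)/p, (1−p)/p] (when this interval contains a positive integer region, i.e., p < 1/2). -/
open Finset
/-!
Writing `f(α) = μ α (1-p)^α / H_α`, one has
`f(α+1) - f(α) = μ (1-p)^α / (H_α H_{α+1}) · ((1 - (α+1)p) H_α - α/(α+1))`,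
so everything reduces to the sign of `(1 - (α+1)p) H_α - α/(α+1)`. It is negative once
`(α+2)p > 1` because `H_α ≤ α`, and nonnegative while `(α+1)p ≤ 1/2` because
`H_α ≥ 2α/(α+1)`. A maximizer can therefore neither be followed by a larger value nor
preceded by one, which pins it between `(1/2 - p)/p` and `(1 - p)/p`.
-/

theorem harmonic_le_self (n : ℕ) : harmonic n ≤ n := by
  induction n with
  | zero => simp
  | succ n ih =>
    rw [harmonic_succ]
    push_cast
    have : ((n : ℚ) + 1)⁻¹ ≤ 1 := inv_le_one_of_one_le₀ (by linarith [n.cast_nonneg (α := ℚ)])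
    linarith

theorem two_mul_le_succ_mul_harmonic {n : ℕ} (hn : 1 ≤ n) : 2 * (n : ℚ) ≤ (n + 1) * harmonic n := by
  induction n, hn using Nat.le_induction with
  | base => norm_num
  | succ n hn ih =>
    have hinv : ((n : ℚ) + 1) * ((n : ℚ) + 1)⁻¹ = 1 := mul_inv_cancel₀ (by positivity)
    rw [harmonic_succ]
    push_cast
    nlinarith [inv_pos.2 (by positivity : (0 : ℚ) < n + 1)]

theorem H_eq_harmonic (n : ℕ) : H n = harmonic n := by
  simp [H, harmonic_eq_sum_Icc]

theorem H_pos_s12 {n : ℕ} (hn : 1 ≤ n) : 0 < H n := by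
  rw [H_eq_harmonic]
  exact_mod_cast harmonic_pos (by omega)

theorem H_succ (n : ℕ) : H (n + 1) = H n + 1 / (n + 1) := by
  simp [H_eq_harmonic]

noncomputable def serviceRate (μ p : ℝ) (n : ℕ) : ℝ := μ * n / H n * (1 - p) ^ n

theorem serviceRate_succ_sub (μ p : ℝ) {α : ℕ} (hα : 1 ≤ α) :
    serviceRate μ p (α + 1) - serviceRate μ p α =
      μ * (1 - p) ^ α / (H α * H (α + 1)) * ((α + 1) * (1 - p) * H α - α * H (α + 1)) := by
  have := (H_pos_s12 hα).ne'
  have := (H_pos_s12 (α.le_succ.trans' hα)).ne'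
  simp only [serviceRate]
  push_cast
  field_simp
  ring

theorem succ_mul_one_sub_mul_H_lt {p : ℝ} {α : ℕ} (hα : 1 ≤ α) (hp : 1 < (α + 2) * p) :
    (α + 1) * (1 - p) * H α < α * H (α + 1) := by
  have hHle : H α ≤ α := by rw [H_eq_harmonic]; exact_mod_cast harmonic_le_self α
  have hHpos := H_pos_s12 hα
  have hα1 : (1 : ℝ) ≤ α := by exact_mod_cast hα
  set c := 1 - (α + 1) * p with hc
  have hcp : c < p := by linarith
  have hc1 : c * (α + 1) < 1 := by nlinarith [mul_lt_mul_of_pos_right hcp (by positivity : (0 : ℝ) < α)]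
  have key : c * (α + 1) * H α < α := by
    rcases le_or_gt c 0 with hc0 | hc0
    · nlinarith
    · calc c * (α + 1) * H α ≤ c * (α + 1) * α := by gcongr
        _ < α := by nlinarith
  rw [H_succ, ← sub_pos]
  have hsplit : (α : ℝ) * (H α + 1 / (α + 1)) - (α + 1) * (1 - p) * H α =
      (α - c * (α + 1) * H α) / (α + 1) := by
    field_simp
    ring
  rw [hsplit]
  exact div_pos (by linarith) (by positivity)

theorem half_sub_mul_H_le {p : ℝ} {α : ℕ} (hα : 1 ≤ α) :
    (1 / 2 - (α + 1) * p) * H α ≤ (α + 1) * (1 - p) * H α - α * H (α + 1) := by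
  have hH : 2 * (α : ℝ) ≤ (α + 1) * H α := by
    rw [H_eq_harmonic]; exact_mod_cast two_mul_le_succ_mul_harmonic hα
  have hsplit : (α + 1) * (1 - p) * H α - α * H (α + 1) - (1 / 2 - (α + 1) * p) * H α =
      ((α + 1) * H α - 2 * α) / (2 * (α + 1)) := by
    rw [H_succ]
    field_simp
    ring
  have : 0 ≤ ((α + 1) * H α - 2 * α) / (2 * (α + 1)) := div_nonneg (by linarith) (by positivity)
  linarith

section Monotonicity

variable {μ p : ℝ} {α : ℕ}

theorem serviceRate_succ_sub_factor_pos (hμ : 0 < μ) (hp1 : p < 1) (hα : 1 ≤ α) :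
    0 < μ * (1 - p) ^ α / (H α * H (α + 1)) := by
  have := H_pos_s12 hα
  have := H_pos_s12 (α.le_succ.trans' hα)
  have : 0 < 1 - p := by linarith
  positivity

theorem serviceRate_succ_lt (hμ : 0 < μ) (hp1 : p < 1) (hα : 1 ≤ α) (hp : 1 < (α + 2) * p) :
    serviceRate μ p (α + 1) < serviceRate μ p α := by
  rw [← sub_neg, serviceRate_succ_sub μ p hα]
  exact mul_neg_of_pos_of_neg (serviceRate_succ_sub_factor_pos hμ hp1 hα)
    (sub_neg.2 (succ_mul_one_sub_mul_H_lt hα hp))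

theorem serviceRate_le_succ (hμ : 0 < μ) (hp1 : p < 1) (hα : 1 ≤ α) (hp : (α + 1) * p ≤ 1 / 2) :
    serviceRate μ p α ≤ serviceRate μ p (α + 1) := by
  rw [← sub_nonneg, serviceRate_succ_sub μ p hα]
  refine mul_nonneg (serviceRate_succ_sub_factor_pos hμ hp1 hα).le ?_
  exact (mul_nonneg (by linarith) (H_pos_s12 hα).le).trans (half_sub_mul_H_le hα)

theorem serviceRate_lt_succ (hμ : 0 < μ) (hp1 : p < 1) (hα : 1 ≤ α) (hp : (α + 1) * p < 1 / 2) :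
    serviceRate μ p α < serviceRate μ p (α + 1) := by
  rw [← sub_pos, serviceRate_succ_sub μ p hα]
  refine mul_pos (serviceRate_succ_sub_factor_pos hμ hp1 hα) ?_
  exact (mul_pos (by linarith) (H_pos_s12 hα)).trans_le (half_sub_mul_H_le hα)

end Monotonicity

theorem stmt12 (μ p : ℝ) (hμ : 0 < μ) (hp0 : 0 < p) (hp1 : p < 1) :
    (∀ α : ℕ, 1 ≤ α → ((1 - p) / p ≤ (α : ℝ) →
        (μ * (α + 1) / H (α + 1)) * (1 - p) ^ (α + 1) ≤ (μ * α / H α) * (1 - p) ^ α)) ∧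
    (∀ α : ℕ, 1 ≤ α → ((α : ℝ) ≤ (1 / 2 - p) / p →
        (μ * α / H α) * (1 - p) ^ α ≤ (μ * (α + 1) / H (α + 1)) * (1 - p) ^ (α + 1))) ∧
    (p < 1 / 2 → ∀ α₀ : ℕ, 1 ≤ α₀ →
      (∀ β : ℕ, 1 ≤ β → (μ * β / H β) * (1 - p) ^ β ≤ (μ * α₀ / H α₀) * (1 - p) ^ α₀) →
      (1 / 2 - p) / p ≤ (α₀ : ℝ) ∧ (α₀ : ℝ) ≤ (1 - p) / p) := by
  have hsucc (α : ℕ) : μ * (α + 1) / H (α + 1) * (1 - p) ^ (α + 1) = serviceRate μ p (α + 1) := by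
    simp [serviceRate]
  simp only [hsucc, div_le_iff₀ hp0, le_div_iff₀ hp0]
  refine ⟨fun α hα h ↦ (serviceRate_succ_lt hμ hp1 hα (by linarith)).le,
    fun α hα h ↦ serviceRate_le_succ hμ hp1 hα (by linarith), fun hp α₀ hα₀ hmax ↦ ⟨?_, ?_⟩⟩
  · by_contra! h
    exact (hmax (α₀ + 1) (by omega)).not_gt (serviceRate_lt_succ hμ hp1 hα₀ (by linarith))
  · by_contra! h
    obtain ⟨β, rfl⟩ : ∃ β, α₀ = β + 1 := Nat.exists_eq_add_of_le' hα₀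
    push_cast at h
    have hβ : 1 ≤ β := by
      have : (0 : ℝ) < β := by nlinarith
      exact_mod_cast this
    exact (hmax β hβ).not_gt (serviceRate_succ_lt hμ hp1 hβ (by linarith))
end

section
/- Fix μ > 0, Δ ≥ 0, integers m ≥ 1, α ≥ 2, and 0 ≤ p ≤ 1 with (1−p)^{α−1} ≤ (Δμ+α)/(α(Δμm+1)·C(mα−1, α−1)). Then ∑_{φ=α}^{mα} C(mα,φ)·[μα/(Δμ + α(H_φ−H_{φ−α}))]·(1−p)^φ p^{mα−φ} ≤ μm(1−p)/(Δμm+1) ≤ ∑_{φ=1}^{m} C(m,φ)·[μ/(Δμ + H_φ−H_{φ−1})]·(1−p)^φ p^{m−φ}. That is, under this condition on p, the minimal spreading allocation maximizes the service rate for probabilistic access with shifted exponential service. -/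
open Finset
/-!
Each rate is compared with a linear function of `φ`. Since `H φ - H (φ - α)` is a sum of `α`
terms each at least `1 / φ`, the rate at level `α` is at most `μ φ / (Δ μ + α)`, while at level
`1` the exact value `1 / φ` gives a rate of at least `μ φ / (Δ μ m + 1)` for `φ ≤ m`.
Binomial sums of `φ` are handled by absorption, `φ C(n, φ) = n C(n - 1, φ - 1)`: for level `1` the
sum is the mean `m (1 - p)`, and for level `α` it becomes `n (1 - p)` times the tail
`P(Bin(n - 1, 1 - p) ≥ α - 1)` with `n = m α`, which the union bound caps by
`C(n - 1, α - 1) (1 - p) ^ (α - 1)`. The condition on `p` is exactly what makes the result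
at most `μ m (1 - p) / (Δ μ m + 1)`.
-/

section Binomial

variable {R : Type*} [CommSemiring R]

theorem add_pow_eq_sum_Icc (x y : R) (n : ℕ) :
    (x + y) ^ n = ∑ k ∈ Icc 0 n, (n.choose k : R) * x ^ k * y ^ (n - k) := by
  rw [add_pow, ← Nat.range_succ_eq_Icc_zero]
  exact sum_congr rfl fun _ _ ↦ by ring

theorem sum_Icc_choose_mul_mul_pow_mul_pow (x y : R) {k : ℕ} (hk : 1 ≤ k) (n : ℕ) :
    ∑ j ∈ Icc k n, (n.choose j : R) * j * x ^ j * y ^ (n - j) =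
      n * x * ∑ j ∈ Icc (k - 1) (n - 1), ((n - 1).choose j : R) * x ^ j * y ^ (n - 1 - j) := by
  cases n with
  | zero => simp [Icc_eq_empty (by omega : ¬k ≤ 0)]
  | succ n =>
    obtain ⟨k, rfl⟩ := Nat.exists_eq_add_of_le' hk
    rw [Nat.add_sub_cancel, Nat.add_sub_cancel, ← map_add_right_Icc, sum_map, mul_sum]
    refine sum_congr rfl fun j _ ↦ ?_
    have h := congrArg (Nat.cast : ℕ → R) (Nat.add_one_mul_choose_eq n j)
    simp only [addRightEmbedding_apply, Nat.add_sub_add_right, Nat.cast_mul, Nat.cast_add,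
      Nat.cast_one] at h ⊢
    rw [← h]
    ring

theorem sum_Icc_one_choose_mul_mul_pow_mul_pow (x y : R) (n : ℕ) :
    ∑ j ∈ Icc 1 n, (n.choose j : R) * j * x ^ j * y ^ (n - j) = n * x * (x + y) ^ (n - 1) := by
  rw [sum_Icc_choose_mul_mul_pow_mul_pow x y le_rfl, add_pow_eq_sum_Icc]

end Binomial

theorem sum_Icc_choose_mul_pow_mul_pow_le {x y : ℝ} (hx : 0 ≤ x) (hy : 0 ≤ y) (k n : ℕ) :
    ∑ j ∈ Icc k n, (n.choose j : ℝ) * x ^ j * y ^ (n - j) ≤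
      n.choose k * x ^ k * (x + y) ^ (n - k) := by
  rcases lt_or_ge n k with hnk | hkn
  · simp [Icc_eq_empty_of_lt hnk, Nat.choose_eq_zero_of_lt hnk]
  have hshift : ∑ j ∈ Icc k n, ((n - k).choose (j - k) : ℝ) * x ^ (j - k) * y ^ (n - j) =
      (x + y) ^ (n - k) := by
    have hIcc : Icc k n = (Icc 0 (n - k)).map (addRightEmbedding k) := by
      rw [map_add_right_Icc, Nat.zero_add, Nat.sub_add_cancel hkn]
    rw [add_pow_eq_sum_Icc, hIcc, sum_map]
    refine sum_congr rfl fun j _ ↦ ?_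
    simp only [addRightEmbedding_apply, Nat.add_sub_cancel, Nat.sub_sub, Nat.add_comm k]
  rw [mul_assoc, ← hshift, mul_sum, mul_sum]
  refine sum_le_sum fun j hj ↦ ?_
  have hkj : k ≤ j := (mem_Icc.mp hj).1
  have hchoose : (n.choose j : ℝ) ≤ n.choose k * (n - k).choose (j - k) := by
    have h := Nat.choose_mul (n := n) hkj
    exact_mod_cast (Nat.le_mul_of_pos_right _ (Nat.choose_pos hkj)).trans h.le
  calc (n.choose j : ℝ) * x ^ j * y ^ (n - j)
      ≤ n.choose k * (n - k).choose (j - k) * (x ^ k * x ^ (j - k)) * y ^ (n - j) := by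
        rw [← pow_add, Nat.add_sub_cancel' hkj]; gcongr
    _ = _ := by ring

theorem sum_Icc_choose_mul_mul_pow_mul_pow_le {x y : ℝ} (hx : 0 ≤ x) (hy : 0 ≤ y) (hxy : x + y = 1)
    {k : ℕ} (hk : 1 ≤ k) (n : ℕ) :
    ∑ j ∈ Icc k n, (n.choose j : ℝ) * j * x ^ j * y ^ (n - j) ≤
      n * x * ((n - 1).choose (k - 1) * x ^ (k - 1)) := by
  rw [sum_Icc_choose_mul_mul_pow_mul_pow x y hk]
  have h := sum_Icc_choose_mul_pow_mul_pow_le hx hy (k - 1) (n - 1)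
  rw [hxy, one_pow, mul_one] at h
  gcongr

theorem H_sub_H_sub_eq_sum {a n : ℕ} (h : a ≤ n) :
    H n - H (n - a) = ∑ i ∈ Icc (n - a + 1) n, (1 : ℝ) / i := by
  have hsplit : Icc 1 n \ Icc 1 (n - a) = Icc (n - a + 1) n := by
    ext i; simp only [mem_sdiff, mem_Icc, not_and, not_le]; omega
  rw [H, H, ← sum_sdiff_eq_sub (Icc_subset_Icc_right (Nat.sub_le n a)), hsplit]

theorem H_sub_H_sub_one {n : ℕ} (hn : 1 ≤ n) : H n - H (n - 1) = 1 / n := by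
  rw [H_sub_H_sub_eq_sum hn, Nat.sub_add_cancel hn, Icc_self, sum_singleton]

theorem div_le_H_sub_H_sub {a n : ℕ} (h : a ≤ n) : (a : ℝ) / n ≤ H n - H (n - a) := by
  rw [H_sub_H_sub_eq_sum h]
  have hcard : #(Icc (n - a + 1) n) = a := by rw [Nat.card_Icc]; omega
  calc (a : ℝ) / n = #(Icc (n - a + 1) n) • ((1 : ℝ) / n) := by
        rw [hcard, nsmul_eq_mul, mul_one_div]
    _ ≤ ∑ i ∈ Icc (n - a + 1) n, (1 : ℝ) / i := by
        refine card_nsmul_le_sum _ _ _ fun i hi ↦ ?_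
        have hi := mem_Icc.mp hi
        gcongr
        · exact_mod_cast (Nat.succ_pos _).trans_le hi.1
        · exact_mod_cast hi.2

theorem mul_div_add_mul_H_sub_le {μ c : ℝ} (hμ : 0 ≤ μ) (hc : 0 ≤ c) {α φ : ℕ} (hα : 0 < α)
    (hαφ : α ≤ φ) : μ * α / (c + α * (H φ - H (φ - α))) ≤ μ * φ / (c + α) := by
  have hαR : (0 : ℝ) < α := by exact_mod_cast hα
  have hφR : (0 : ℝ) < φ := by exact_mod_cast hα.trans_le hαφ
  have hαφR : (α : ℝ) ≤ φ := by exact_mod_cast hαφ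
  have hH : (α : ℝ) ≤ φ * (H φ - H (φ - α)) :=
    (div_le_iff₀' hφR).mp (div_le_H_sub_H_sub hαφ)
  have hD : 0 < c + α * (H φ - H (φ - α)) := by
    have hHpos : 0 < H φ - H (φ - α) := (div_pos hαR hφR).trans_le (div_le_H_sub_H_sub hαφ)
    positivity
  rw [div_le_div_iff₀ hD (by positivity)]
  nlinarith [mul_le_mul_of_nonneg_left hH (mul_nonneg hμ hαR.le),
    mul_le_mul_of_nonneg_left hαφR (mul_nonneg hμ hc)]

theorem mul_div_le_div_add_H_sub_H_sub_one {μ c : ℝ} (hμ : 0 ≤ μ) (hc : 0 ≤ c) {φ m : ℕ}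
    (hφ : 1 ≤ φ) (hφm : φ ≤ m) : μ * φ / (c * m + 1) ≤ μ / (c + (H φ - H (φ - 1))) := by
  have hφmR : (φ : ℝ) ≤ m := by exact_mod_cast hφm
  have hrate : μ / (c + 1 / φ) = μ * φ / (c * φ + 1) := by field_simp
  rw [H_sub_H_sub_one hφ, hrate]
  gcongr

theorem stmt19 (μ Δ p : ℝ) (hμ : 0 < μ) (hΔ : 0 ≤ Δ) (hp0 : 0 ≤ p) (hp1 : p ≤ 1)
    (m α : ℕ) (hm : 1 ≤ m) (hα : 2 ≤ α)
    (hcond : (1 - p) ^ (α - 1) ≤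
      (Δ * μ + α) / ((α : ℝ) * (Δ * μ * m + 1) * ((m * α - 1).choose (α - 1)))) :
    ∑ φ ∈ Finset.Icc α (m * α),
        ((m * α).choose φ) * (μ * α / (Δ * μ + α * (H φ - H (φ - α)))) *
          (1 - p) ^ φ * p ^ (m * α - φ)
      ≤ μ * m * (1 - p) / (Δ * μ * m + 1) ∧
    μ * m * (1 - p) / (Δ * μ * m + 1) ≤
      ∑ φ ∈ Finset.Icc 1 m,
        (m.choose φ) * (μ / (Δ * μ + (H φ - H (φ - 1)))) * (1 - p) ^ φ * p ^ (m - φ) := by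
  have hc : 0 ≤ Δ * μ := mul_nonneg hΔ hμ.le
  have hq : 0 ≤ 1 - p := sub_nonneg.mpr hp1
  have hqp : 1 - p + p = 1 := sub_add_cancel 1 p
  have hα1 : 1 ≤ α := by omega
  have hC : (0 : ℝ) < (m * α - 1).choose (α - 1) := by
    exact_mod_cast Nat.choose_pos (Nat.sub_le_sub_right (Nat.le_mul_of_pos_left α hm) 1)
  rw [le_div_iff₀ (by positivity)] at hcond
  constructor
  · calc _ ≤ ∑ φ ∈ Icc α (m * α),
            ((m * α).choose φ : ℝ) * (μ * φ / (Δ * μ + α)) * (1 - p) ^ φ * p ^ (m * α - φ) := by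
          refine sum_le_sum fun φ hφ ↦ ?_
          have hrate := mul_div_add_mul_H_sub_le hμ.le hc hα1 (mem_Icc.mp hφ).1
          gcongr
      _ = μ / (Δ * μ + α) * ∑ φ ∈ Icc α (m * α),
            ((m * α).choose φ : ℝ) * φ * (1 - p) ^ φ * p ^ (m * α - φ) := by
          rw [mul_sum]; exact sum_congr rfl fun _ _ ↦ by ring
      _ ≤ μ / (Δ * μ + α) * ((m * α : ℕ) * (1 - p) *
            ((m * α - 1).choose (α - 1) * (1 - p) ^ (α - 1))) := by
          gcongr
          exact sum_Icc_choose_mul_mul_pow_mul_pow_le hq hp0 hqp hα1 _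
      _ ≤ μ * m * (1 - p) / (Δ * μ * m + 1) := by
          rw [div_mul_eq_mul_div, div_le_div_iff₀ (by positivity) (by positivity)]
          push_cast
          nlinarith [mul_le_mul_of_nonneg_left hcond (by positivity : 0 ≤ μ * m * (1 - p))]
  · calc _ = μ / (Δ * μ * m + 1) * (m * (1 - p) * (1 - p + p) ^ (m - 1)) := by
          rw [hqp, one_pow, mul_one]; ring
      _ = ∑ φ ∈ Icc 1 m,
            (m.choose φ : ℝ) * (μ * φ / (Δ * μ * m + 1)) * (1 - p) ^ φ * p ^ (m - φ) := by
          rw [← sum_Icc_one_choose_mul_mul_pow_mul_pow, mul_sum]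
          exact sum_congr rfl fun _ _ ↦ by ring
      _ ≤ _ := by
          refine sum_le_sum fun φ hφ ↦ ?_
          have hrate := mul_div_le_div_add_H_sub_H_sub_one hμ.le hc (mem_Icc.mp hφ).1 (mem_Icc.mp hφ).2
          gcongr
end
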